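/- Assume the graph has at most one edge joining any two vertices. Let t ∈ ℂ* be not a root of unity, and let s = (s_k)_{k∈I} with s_k ∈ GL(W_k) diagonalizable, such that for any eigenvalue λ of any s_k, any eigenvalue λ' of any s_l, and any n ∈ ℤ∖{0}, one has λ ≠ t^n·λ'. Suppose (B,i,j) is an ADHM datum with μ(B,i,j) = 0 whose G_V-orbit is a closed subset of M (standard topology), and suppose there exists g ∈ G_V with g·(B,i,j) = ((t·B_h)_{h∈H}, (t·i_k∘s_k^{-1})_{k∈I}, (t·s_k∘j_k)_{k∈I}). Then B = 0, i = 0 and j = 0. (The parameter (s,t) is generic: the fixed-point set M_0(v,w)^A of the affine quiver variety is {0} for every v.) -/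

import Mathlib

noncomputable section

/-- The data of a finite graph without edge loops, presented by its set `H` of oriented
edges over the vertex set `I`: source and target maps `src`, `tgt`, and a fixed-point-free
orientation-reversing involution `bar`. -/
structure GraphData (I H : Type) where
  src : H → I
  tgt : H → I
  bar : H → H
  bar_invol : ∀ h, bar (bar h) = h
  bar_ne_self : ∀ h, bar h ≠ h
  src_bar : ∀ h, src (bar h) = tgt h
  tgt_bar : ∀ h, tgt (bar h) = src h
  no_loops : ∀ h, src h ≠ tgt h

/-- Transport of the fibres of a family of normed spaces along an equality of indices. -/
def vCast {I : Type} (V : I → Type)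
    [∀ k, NormedAddCommGroup (V k)] [∀ k, NormedSpace ℂ (V k)]
    {k l : I} (e : k = l) : V k ≃L[ℂ] V l := by
  subst e
  exact ContinuousLinearEquiv.refl ℂ (V k)

/-- Stability of an ADHM datum `(B, i, j)`: the only family of subspaces `S k ⊆ V k`
which is `B`-invariant and contained in `ker (j k)` is the zero family. -/
def IsStable {I H : Type} (G : GraphData I H) (V W : I → Type)
    [∀ k, NormedAddCommGroup (V k)] [∀ k, NormedSpace ℂ (V k)]
    [∀ k, NormedAddCommGroup (W k)] [∀ k, NormedSpace ℂ (W k)]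
    (B : ∀ h : H, V (G.src h) →L[ℂ] V (G.tgt h))
    (j : ∀ k : I, V k →L[ℂ] W k) : Prop :=
  ∀ S : ∀ k : I, Submodule ℂ (V k),
    (∀ h : H, ∀ x ∈ S (G.src h), B h x ∈ S (G.tgt h)) →
    (∀ k : I, ∀ x ∈ S k, j k x = 0) →
    ∀ k : I, S k = ⊥

/-- For an oriented edge `h`, the composite `A ∘ A'` of a map `A` along `h` and a map `A'`
along `bar h`, as an endomorphism of `V (tgt h)`. -/
def barComp {I H : Type} (G : GraphData I H) (V : I → Type)
    [∀ k, NormedAddCommGroup (V k)] [∀ k, NormedSpace ℂ (V k)] (h : H)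
    (A : V (G.src h) →L[ℂ] V (G.tgt h))
    (A' : V (G.src (G.bar h)) →L[ℂ] V (G.tgt (G.bar h))) :
    V (G.tgt h) →L[ℂ] V (G.tgt h) :=
  A.comp ((vCast V (G.tgt_bar h) : V (G.tgt (G.bar h)) →L[ℂ] V (G.src h)).comp
    (A'.comp ((vCast V (G.src_bar h)).symm : V (G.tgt h) →L[ℂ] V (G.src (G.bar h)))))

/-- The `k`-th component of the moment map `μ(B, i, j) = ε B B + i j`. -/
def momentMap {I H : Type} [Fintype H] [DecidableEq I] (G : GraphData I H)
    (V W : I → Type)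
    [∀ k, NormedAddCommGroup (V k)] [∀ k, NormedSpace ℂ (V k)]
    [∀ k, NormedAddCommGroup (W k)] [∀ k, NormedSpace ℂ (W k)]
    (ε : H → ℂ)
    (B : ∀ h : H, V (G.src h) →L[ℂ] V (G.tgt h))
    (i : ∀ k : I, W k →L[ℂ] V k) (j : ∀ k : I, V k →L[ℂ] W k) (k : I) :
    V k →L[ℂ] V k :=
  (∑ h : H, if e : G.tgt h = k then
      ((vCast V e : V (G.tgt h) →L[ℂ] V k).comp
        ((ε h • barComp G V h (B h) (B (G.bar h))).comp
          ((vCast V e).symm : V k →L[ℂ] V (G.tgt h))))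
    else 0)
    + (i k).comp (j k)

/-- The action of `g ∈ G_V = ∏ₖ GL(V_k)` on the `B`-component of an ADHM datum. -/
def actB {I H : Type} (G : GraphData I H) (V : I → Type)
    [∀ k, NormedAddCommGroup (V k)] [∀ k, NormedSpace ℂ (V k)]
    (g : ∀ k : I, V k ≃L[ℂ] V k)
    (B : ∀ h : H, V (G.src h) →L[ℂ] V (G.tgt h)) :
    ∀ h : H, V (G.src h) →L[ℂ] V (G.tgt h) :=
  fun h => ((g (G.tgt h) : V (G.tgt h) →L[ℂ] V (G.tgt h)).comp (B h)).comp
    ((g (G.src h)).symm : V (G.src h) →L[ℂ] V (G.src h))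

/-- The action of `g ∈ G_V` on the `i`-component of an ADHM datum. -/
def actI {I : Type} (V W : I → Type)
    [∀ k, NormedAddCommGroup (V k)] [∀ k, NormedSpace ℂ (V k)]
    [∀ k, NormedAddCommGroup (W k)] [∀ k, NormedSpace ℂ (W k)]
    (g : ∀ k : I, V k ≃L[ℂ] V k) (i : ∀ k : I, W k →L[ℂ] V k) :
    ∀ k : I, W k →L[ℂ] V k :=
  fun k => (g k : V k →L[ℂ] V k).comp (i k)

/-- The action of `g ∈ G_V` on the `j`-component of an ADHM datum. -/
def actJ {I : Type} (V W : I → Type)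
    [∀ k, NormedAddCommGroup (V k)] [∀ k, NormedSpace ℂ (V k)]
    [∀ k, NormedAddCommGroup (W k)] [∀ k, NormedSpace ℂ (W k)]
    (g : ∀ k : I, V k ≃L[ℂ] V k) (j : ∀ k : I, V k →L[ℂ] W k) :
    ∀ k : I, V k →L[ℂ] W k :=
  fun k => (j k).comp ((g k).symm : V k →L[ℂ] V k)

namespace S9Aux
open DirectSum

lemma maxGen_map {V1 V2 : Type} [AddCommGroup V1] [Module ℂ V1] [AddCommGroup V2] [Module ℂ V2]
    (f1 : Module.End ℂ V1) (f2 : Module.End ℂ V2) (A : V1 →ₗ[ℂ] V2) (t c : ℂ)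
    (hc : ∀ x, f2 (A x) = t • A (f1 x)) :
    ∀ v ∈ f1.maxGenEigenspace c, A v ∈ f2.maxGenEigenspace (t * c) := by
  intro v hv
  rw [Module.End.mem_maxGenEigenspace] at hv ⊢
  obtain ⟨N, hN⟩ := hv
  have key : ∀ (N : ℕ) (x : V1),
      ((f2 - (t * c) • (1 : Module.End ℂ V2)) ^ N) (A x)
        = t ^ N • A (((f1 - c • (1 : Module.End ℂ V1)) ^ N) x) := by
    intro N
    induction N with
    | zero => intro x; simp
    | succ n ih =>
        intro x
        have hp : (f2 - (t * c) • (1 : Module.End ℂ V2)) (A x)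
            = t • A ((f1 - c • (1 : Module.End ℂ V1)) x) := by
          simp only [LinearMap.sub_apply, LinearMap.smul_apply, Module.End.one_apply, hc x,
            map_sub, map_smul, smul_sub, smul_smul]
        calc ((f2 - (t * c) • (1 : Module.End ℂ V2)) ^ (n + 1)) (A x)
            = ((f2 - (t * c) • (1 : Module.End ℂ V2)) ^ n)
                ((f2 - (t * c) • (1 : Module.End ℂ V2)) (A x)) := by
              rw [pow_succ, Module.End.mul_apply]
          _ = t • ((f2 - (t * c) • (1 : Module.End ℂ V2)) ^ n)
                (A ((f1 - c • (1 : Module.End ℂ V1)) x)) := by rw [hp, map_smul]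
          _ = t • (t ^ n • A (((f1 - c • (1 : Module.End ℂ V1)) ^ n)
                ((f1 - c • (1 : Module.End ℂ V1)) x))) := by rw [ih]
          _ = t ^ (n + 1) • A (((f1 - c • (1 : Module.End ℂ V1)) ^ (n + 1)) x) := by
              rw [pow_succ (f1 - c • (1 : Module.End ℂ V1)), Module.End.mul_apply, smul_smul,
                ← pow_succ']
  exact ⟨N, by rw [key, hN, map_zero, smul_zero]⟩

lemma exists_diag {V1 : Type} [NormedAddCommGroup V1] [NormedSpace ℂ V1] [FiniteDimensional ℂ V1]
    (f : Module.End ℂ V1) (w : ℂ → ℂ) (hw : ∀ c, w c ≠ 0) :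
    ∃ γ : V1 ≃L[ℂ] V1, ∀ c : ℂ, ∀ v ∈ f.maxGenEigenspace c, γ v = w c • v := by
  classical
  have hint : DirectSum.IsInternal (fun c : ℂ => f.maxGenEigenspace c) :=
    (DirectSum.isInternal_submodule_iff_iSupIndep_and_iSup_eq_top _).2
      ⟨f.independent_maxGenEigenspace, f.iSup_maxGenEigenspace_eq_top⟩
  let e : (⨁ c : ℂ, f.maxGenEigenspace c) ≃ₗ[ℂ] V1 :=
    LinearEquiv.ofBijective (DirectSum.coeLinearMap _) hint
  let d : (⨁ c : ℂ, f.maxGenEigenspace c) ≃ₗ[ℂ] (⨁ c : ℂ, f.maxGenEigenspace c) :=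
    DFinsupp.mapRange.linearEquiv
      (fun c => LinearEquiv.smulOfNeZero ℂ (f.maxGenEigenspace c) (w c) (hw c))
  refine ⟨((e.symm.trans d).trans e).toContinuousLinearEquiv, fun c v hv => ?_⟩
  have h1 : e (DirectSum.of (fun c : ℂ => f.maxGenEigenspace c) c ⟨v, hv⟩) = v :=
    DirectSum.coeLinearMap_of _ _ _
  have h2 : e.symm v = DirectSum.of (fun c : ℂ => f.maxGenEigenspace c) c ⟨v, hv⟩ :=
    e.symm_apply_eq.mpr h1.symm
  have h3 : d (DirectSum.of (fun c : ℂ => f.maxGenEigenspace c) c ⟨v, hv⟩)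
      = DirectSum.of (fun c : ℂ => f.maxGenEigenspace c) c
          (w c • (⟨v, hv⟩ : f.maxGenEigenspace c)) := by
    rw [show DirectSum.of (fun c : ℂ => f.maxGenEigenspace c) c ⟨v, hv⟩
        = DFinsupp.single c ⟨v, hv⟩ from rfl,
      show DirectSum.of (fun c : ℂ => f.maxGenEigenspace c) c
          (w c • (⟨v, hv⟩ : f.maxGenEigenspace c))
        = DFinsupp.single c (w c • (⟨v, hv⟩ : f.maxGenEigenspace c)) from rfl]
    show (DFinsupp.mapRange.linearEquiv
      (fun c => LinearEquiv.smulOfNeZero ℂ (f.maxGenEigenspace c) (w c) (hw c))) _ = _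
    rw [DFinsupp.mapRange.linearEquiv_apply, DFinsupp.mapRange_single]
    rfl
  show (((e.symm.trans d).trans e).toContinuousLinearEquiv : V1 → V1) v = w c • v
  rw [LinearEquiv.coe_toContinuousLinearEquiv']
  simp only [LinearEquiv.trans_apply, h2, h3]
  calc e (DirectSum.of (fun c : ℂ => f.maxGenEigenspace c) c
        (w c • (⟨v, hv⟩ : f.maxGenEigenspace c)))
      = ((w c • (⟨v, hv⟩ : f.maxGenEigenspace c) : f.maxGenEigenspace c) : V1) :=
        DirectSum.coeLinearMap_of _ _ _
    _ = w c • v := rfl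

lemma clm_ext_of_iSup {V1 V2 : Type} [NormedAddCommGroup V1] [NormedSpace ℂ V1]
    [NormedAddCommGroup V2] [NormedSpace ℂ V2]
    {E : ℂ → Submodule ℂ V1} (htop : (⨆ c, E c) = ⊤)
    {f g : V1 →L[ℂ] V2} (h : ∀ c : ℂ, ∀ v ∈ E c, f v = g v) : f = g := by
  ext x
  have hx : x ∈ ⨆ c, E c := htop.symm ▸ Submodule.mem_top
  refine Submodule.iSup_induction E (motive := fun y => f y = g y) hx h (by simp) ?_
  intro a b ha hb
  simp [map_add, ha, hb]

lemma zpow_eq_one_imp {t : ℂ} (ht0 : t ≠ 0) (htu : ∀ n : ℕ, n ≠ 0 → t ^ n ≠ 1) :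
    ∀ n : ℤ, t ^ n = 1 → n = 0 := by
  intro n hn
  rcases n with k | k
  · simp only [Int.ofNat_eq_coe, zpow_natCast] at hn
    by_contra hk
    exact htu k (by simpa using hk) hn
  · exfalso
    rw [zpow_negSucc] at hn
    have h1 : t ^ (k + 1) = 1 := by
      have := congrArg (fun x : ℂ => x⁻¹) hn
      simpa using this
    exact htu (k + 1) k.succ_ne_zero h1


lemma exists_deg {t : ℂ} (ht0 : t ≠ 0) (htu : ∀ n : ℕ, n ≠ 0 → t ^ n ≠ 1)
    (P : ℂ → Prop) (hP0 : ∀ μ, P μ → μ ≠ 0)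
    (hPt : ∀ μ μ' (n : ℤ), P μ → P μ' → μ = t ^ n * μ' → n = 0) :
    ∃ m : ℂ → ℤ, (∀ a : ℂ, a ≠ 0 → m (t * a) = m a + 1) ∧
      (∀ μ, P μ → m (t * μ⁻¹) = 1) := by
  classical
  have hzone := zpow_eq_one_imp ht0 htu
  let r : ℂ → ℂ → Prop := fun a b => ∃ n : ℤ, a = t ^ n * b
  have hr_refl : ∀ a, r a a := fun a => ⟨0, by simp⟩
  have hr_symm : ∀ {a b}, r a b → r b a := by
    rintro a b ⟨n, rfl⟩
    exact ⟨-n, by rw [← mul_assoc, ← zpow_add₀ ht0]; simp⟩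
  have hr_trans : ∀ {a b c}, r a b → r b c → r a c := by
    rintro a b c ⟨n, rfl⟩ ⟨p, rfl⟩
    exact ⟨n + p, by rw [← mul_assoc, ← zpow_add₀ ht0]⟩
  let st : Setoid ℂ := ⟨r, ⟨hr_refl, fun h => hr_symm h, fun h h' => hr_trans h h'⟩⟩
  let Mk : ℂ → Prop := fun a => ∃ p, (∃ μ, P μ ∧ p = t * μ⁻¹) ∧ r a p
  have huniq : ∀ p p', (∃ μ, P μ ∧ p = t * μ⁻¹) → (∃ μ, P μ ∧ p' = t * μ⁻¹) →
      r p p' → p = p' := by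
    rintro p p' ⟨μ, hμ, rfl⟩ ⟨μ', hμ', rfl⟩ ⟨n, hn⟩
    have hμ0 := hP0 μ hμ
    have hμ0' := hP0 μ' hμ'
    have hkey : μ' = t ^ n * μ := by
      field_simp at hn
      have hn2 : t * μ' = t * (t ^ n * μ) := by rw [hn]; ring
      exact mul_left_cancel₀ ht0 hn2
    have hn0 := hPt μ' μ n hμ' hμ hkey
    rw [hn0] at hn
    simpa using hn
  let base : ℂ → ℂ := fun a => if h : Mk a then h.choose else (Quotient.mk st a).out
  have hbase_pos : ∀ (a : ℂ) (h : Mk a), base a = h.choose := fun a h => dif_pos h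
  have hbase_neg : ∀ (a : ℂ) (h : ¬ Mk a), base a = (Quotient.mk st a).out :=
    fun a h => dif_neg h
  have hbase_rel : ∀ a, r a (base a) := by
    intro a
    by_cases h : Mk a
    · rw [hbase_pos a h]
      exact h.choose_spec.2
    · rw [hbase_neg a h]
      exact hr_symm (Quotient.exact (Quotient.out_eq (Quotient.mk st a)))
  have hMk_eq : ∀ a b, r a b → (Mk a ↔ Mk b) := by
    intro a b hab
    constructor
    · rintro ⟨p, hp, hrp⟩; exact ⟨p, hp, hr_trans (hr_symm hab) hrp⟩
    · rintro ⟨p, hp, hrp⟩; exact ⟨p, hp, hr_trans hab hrp⟩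
  have hbase_eq : ∀ a b, r a b → base a = base b := by
    intro a b hab
    by_cases h : Mk a
    · have h' : Mk b := (hMk_eq a b hab).1 h
      rw [hbase_pos a h, hbase_pos b h']
      exact huniq _ _ h.choose_spec.1 h'.choose_spec.1
        (hr_trans (hr_symm h.choose_spec.2) (hr_trans hab h'.choose_spec.2))
    · have h' : ¬ Mk b := fun hb => h ((hMk_eq a b hab).2 hb)
      rw [hbase_neg a h, hbase_neg b h']
      congr 1
      exact Quotient.sound hab
  have hexp : ∀ a, ∃ n : ℤ, a = t ^ n * base a := fun a => hbase_rel a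
  have hexpo : ∀ a, a = t ^ ((hexp a).choose) * base a := fun a => (hexp a).choose_spec
  have hexpo_uniq : ∀ a, a ≠ 0 → ∀ n : ℤ, a = t ^ n * base a → n = (hexp a).choose := by
    intro a ha n hn
    have hb : base a ≠ 0 := by
      intro h0
      obtain ⟨n', hn'⟩ := hexp a
      rw [h0, mul_zero] at hn'
      exact ha hn'
    have h1 : t ^ n * base a = t ^ ((hexp a).choose) * base a := by
      rw [← hn, ← hexpo a]
    have ht : t ^ n = t ^ ((hexp a).choose) := mul_right_cancel₀ hb h1
    have h2 : t ^ (n - (hexp a).choose) = 1 := by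
      rw [zpow_sub₀ ht0, ht, div_self (zpow_ne_zero _ ht0)]
    have := hzone _ h2
    omega
  refine ⟨fun a => (hexp a).choose + (if Mk a then 1 else 0), ?_, ?_⟩
  · intro a ha
    have hta : t * a ≠ 0 := mul_ne_zero ht0 ha
    have hr1 : r (t * a) a := ⟨1, by rw [zpow_one]⟩
    have h1 : base (t * a) = base a := hbase_eq _ _ hr1
    have h2 : (hexp (t * a)).choose = (hexp a).choose + 1 := by
      refine (hexpo_uniq (t * a) hta _ ?_).symm
      rw [h1, zpow_add₀ ht0, zpow_one]
      calc t * a = t * (t ^ ((hexp a).choose) * base a) := by rw [← hexpo a]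
        _ = t ^ ((hexp a).choose) * t * base a := by ring
    have h3 : Mk (t * a) ↔ Mk a := hMk_eq _ _ hr1
    show (hexp (t * a)).choose + (if Mk (t * a) then 1 else 0)
      = ((hexp a).choose + (if Mk a then 1 else 0)) + 1
    by_cases hm : Mk a
    · rw [if_pos hm, if_pos (h3.2 hm), h2]
    · rw [if_neg hm, if_neg (fun hh => hm (h3.1 hh)), h2]
      omega
  · intro μ hμ
    have hμ0 := hP0 μ hμ
    have hp0 : t * μ⁻¹ ≠ 0 := mul_ne_zero ht0 (inv_ne_zero hμ0)
    have hMk : Mk (t * μ⁻¹) := ⟨t * μ⁻¹, ⟨μ, hμ, rfl⟩, hr_refl _⟩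
    have hb : base (t * μ⁻¹) = t * μ⁻¹ := by
      rw [hbase_pos _ hMk]
      exact huniq _ _ hMk.choose_spec.1 ⟨μ, hμ, rfl⟩ (hr_symm hMk.choose_spec.2)
    have he : (0 : ℤ) = (hexp (t * μ⁻¹)).choose :=
      hexpo_uniq _ hp0 0 (by rw [hb, zpow_zero, one_mul])
    show (hexp (t * μ⁻¹)).choose + (if Mk (t * μ⁻¹) then 1 else 0) = 1
    rw [if_pos hMk, ← he]
    ring

end S9Aux

/-- Assume at most one edge joins any two vertices. Let `t ∈ ℂ*` be not
a root of unity and `s = (s_k)` diagonalizable with no two eigenvalues (of any `s_k`,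
`s_l`) differing by a nonzero integer power of `t`. If an ADHM datum with `μ = 0` and
closed `G_V`-orbit satisfies `g · (B,i,j) = (t·B, t·i∘s⁻¹, t·s∘j)` for some `g ∈ G_V`,
then `(B, i, j) = 0`; i.e. the parameter `(s, t)` is generic. -/
theorem statement9
    {I H : Type} [Fintype I] [Fintype H] [DecidableEq I]
    (G : GraphData I H) (V W : I → Type)
    [∀ k, NormedAddCommGroup (V k)] [∀ k, NormedSpace ℂ (V k)]
    [∀ k, FiniteDimensional ℂ (V k)]
    [∀ k, NormedAddCommGroup (W k)] [∀ k, NormedSpace ℂ (W k)]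
    [∀ k, FiniteDimensional ℂ (W k)]
    (hsimple : ∀ h h' : H, G.src h = G.src h' → G.tgt h = G.tgt h' → h = h')
    (ε : H → ℂ) (hε0 : ∀ h, ε h ≠ 0) (hεbar : ∀ h, ε (G.bar h) = - ε h)
    (t : ℂ) (ht0 : t ≠ 0) (htu : ∀ n : ℕ, n ≠ 0 → t ^ n ≠ 1)
    (s : ∀ k : I, W k ≃L[ℂ] W k)
    (hdiag : ∀ k : I, (⨆ c : ℂ, LinearMap.ker
        (((s k).toLinearEquiv : W k →ₗ[ℂ] W k) - c • (LinearMap.id : W k →ₗ[ℂ] W k)))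
      = ⊤)
    (heig : ∀ (k l : I) (c c' : ℂ),
      LinearMap.ker (((s k).toLinearEquiv : W k →ₗ[ℂ] W k)
        - c • (LinearMap.id : W k →ₗ[ℂ] W k)) ≠ ⊥ →
      LinearMap.ker (((s l).toLinearEquiv : W l →ₗ[ℂ] W l)
        - c' • (LinearMap.id : W l →ₗ[ℂ] W l)) ≠ ⊥ →
      ∀ n : ℤ, n ≠ 0 → c ≠ t ^ n * c')
    (B : ∀ h : H, V (G.src h) →L[ℂ] V (G.tgt h))
    (i : ∀ k : I, W k →L[ℂ] V k) (j : ∀ k : I, V k →L[ℂ] W k)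
    (hμ : ∀ k : I, momentMap G V W ε B i j k = 0)
    (hclosed : IsClosed {m : (∀ h : H, V (G.src h) →L[ℂ] V (G.tgt h)) ×
        (∀ k : I, W k →L[ℂ] V k) × (∀ k : I, V k →L[ℂ] W k) |
      ∃ g : ∀ k : I, V k ≃L[ℂ] V k,
        m = (actB G V g B, actI V W g i, actJ V W g j)})
    (hfix : ∃ g : ∀ k : I, V k ≃L[ℂ] V k,
      (∀ h : H, actB G V g B h = t • B h) ∧
      (∀ k : I, actI V W g i k = t • ((i k).comp ((s k).symm : W k →L[ℂ] W k))) ∧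
      (∀ k : I, actJ V W g j k = t • ((s k : W k →L[ℂ] W k).comp (j k)))) :
    (∀ h : H, B h = 0) ∧ (∀ k : I, i k = 0) ∧ (∀ k : I, j k = 0) := by
  classical
  obtain ⟨g, hgB, hgI, hgJ⟩ := hfix
  -- endomorphism families
  let gE : ∀ k : I, Module.End ℂ (V k) := fun k => ((g k : V k →L[ℂ] V k) : V k →ₗ[ℂ] V k)
  let sE : ∀ k : I, Module.End ℂ (W k) :=
    fun k => (((s k).symm : W k →L[ℂ] W k) : W k →ₗ[ℂ] W k)
  -- the eigenvalue predicate
  let P : ℂ → Prop := fun μ => ∃ k, LinearMap.ker (((s k).toLinearEquiv : W k →ₗ[ℂ] W k)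
      - μ • (LinearMap.id : W k →ₗ[ℂ] W k)) ≠ ⊥
  have hP0 : ∀ μ, P μ → μ ≠ 0 := by
    rintro μ ⟨k, hk⟩ rfl
    apply hk
    rw [zero_smul, sub_zero]
    exact LinearMap.ker_eq_bot.2 (s k).toLinearEquiv.injective
  have hPt : ∀ (μ μ' : ℂ) (n : ℤ), P μ → P μ' → μ = t ^ n * μ' → n = 0 := by
    rintro μ μ' n ⟨k, hk⟩ ⟨l, hl⟩ heq
    by_contra hn
    exact heig k l μ μ' hk hl n hn heq
  obtain ⟨m, hm1, hm2⟩ := S9Aux.exists_deg ht0 htu P hP0 hPt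
  have hm2' : ∀ μ, P μ → m (t⁻¹ * μ⁻¹) = -1 := by
    intro μ hμ
    have hμ0 := hP0 μ hμ
    have e1 : t * (t⁻¹ * μ⁻¹) = μ⁻¹ := by field_simp
    have h1 := hm1 (t⁻¹ * μ⁻¹) (mul_ne_zero (inv_ne_zero ht0) (inv_ne_zero hμ0))
    rw [e1] at h1
    have h2 := hm1 μ⁻¹ (inv_ne_zero hμ0)
    have h3 := hm2 μ hμ
    omega
  -- pointwise intertwining relations
  have hgBpt : ∀ (h : H) (x : V (G.src h)),
      g (G.tgt h) (B h x) = t • B h (g (G.src h) x) := by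
    intro h x
    have h9 := congrArg (fun (f : V (G.src h) →L[ℂ] V (G.tgt h)) =>
      f (g (G.src h) x)) (hgB h)
    simpa [actB] using h9
  have hgIpt : ∀ (k : I) (x : W k), g k (i k x) = t • i k ((s k).symm x) := by
    intro k x
    have h9 := congrArg (fun (f : W k →L[ℂ] V k) => f x) (hgI k)
    simpa [actI] using h9
  have hgJpt : ∀ (k : I) (x : V k), (s k).symm (j k x) = t • j k (g k x) := by
    intro k x
    have h9 := congrArg (fun (f : V k →L[ℂ] W k) => f (g k x)) (hgJ k)
    simp only [actJ, ContinuousLinearMap.comp_apply, ContinuousLinearEquiv.coe_coe,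
      ContinuousLinearEquiv.symm_apply_apply, ContinuousLinearMap.smul_apply] at h9
    -- h9 : j k x = t • (s k) (j k (g k x))
    calc (s k).symm (j k x) = (s k).symm (t • (s k) (j k (g k x))) := by rw [h9]
      _ = t • j k (g k x) := by rw [map_smul, ContinuousLinearEquiv.symm_apply_apply]
  -- membership of images in generalized eigenspaces
  have hBmem : ∀ (h : H) (c : ℂ) (v : V (G.src h)), v ∈ (gE (G.src h)).maxGenEigenspace c →
      B h v ∈ (gE (G.tgt h)).maxGenEigenspace (t * c) := by
    intro h c v hv
    exact S9Aux.maxGen_map (gE (G.src h)) (gE (G.tgt h))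
      ((B h : V (G.src h) →L[ℂ] V (G.tgt h)) : V (G.src h) →ₗ[ℂ] V (G.tgt h)) t c
      (hgBpt h) v hv
  have hJmem : ∀ (k : I) (c : ℂ) (v : V k), v ∈ (gE k).maxGenEigenspace c →
      j k v ∈ (sE k).maxGenEigenspace (t * c) := by
    intro k c v hv
    exact S9Aux.maxGen_map (gE k) (sE k) ((j k : V k →L[ℂ] W k) : V k →ₗ[ℂ] W k) t c
      (hgJpt k) v hv
  have hImem : ∀ (k : I) (μ : ℂ) (w : W k),
      w ∈ LinearMap.ker (((s k).toLinearEquiv : W k →ₗ[ℂ] W k)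
        - μ • (LinearMap.id : W k →ₗ[ℂ] W k)) →
      i k w ∈ (gE k).maxGenEigenspace (t * μ⁻¹) := by
    intro k μ w hw
    by_cases hw0 : w = 0
    · rw [hw0, map_zero]
      exact Submodule.zero_mem _
    have hsw : s k w = μ • w := by
      rw [LinearMap.mem_ker, LinearMap.sub_apply, LinearMap.smul_apply, LinearMap.id_apply,
        sub_eq_zero] at hw
      exact hw
    have hμ0 : μ ≠ 0 := by
      rintro rfl
      rw [zero_smul] at hsw
      exact hw0 (by simpa using congrArg (s k).symm hsw)
    have h4 : w = μ • (s k).symm w := by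
      have h5 := congrArg (s k).symm hsw
      rwa [ContinuousLinearEquiv.symm_apply_apply, map_smul] at h5
    have hmem : w ∈ (sE k).maxGenEigenspace μ⁻¹ := by
      rw [Module.End.mem_maxGenEigenspace]
      refine ⟨1, ?_⟩
      have h5 : (s k).symm w = μ⁻¹ • w := by
        conv_rhs => rw [h4]
        rw [smul_smul, inv_mul_cancel₀ hμ0, one_smul]
      simp only [pow_one, LinearMap.sub_apply, LinearMap.smul_apply, Module.End.one_apply]
      rw [show (sE k) w = (s k).symm w from rfl, h5, sub_self]
    exact S9Aux.maxGen_map (sE k) (gE k) ((i k : W k →L[ℂ] V k) : W k →ₗ[ℂ] V k) t μ⁻¹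
      (hgIpt k) w hmem
  -- the zero generalized eigenspace of an invertible map is trivial
  have hzero : ∀ (k : I) (v : V k), v ∈ (gE k).maxGenEigenspace 0 → v = 0 := by
    intro k v hv
    rw [Module.End.mem_maxGenEigenspace] at hv
    obtain ⟨N, hN⟩ := hv
    rw [zero_smul, sub_zero] at hN
    have hinj : Function.Injective ((gE k) ^ N) := by
      rw [Module.End.coe_pow]
      exact Function.Injective.iterate (fun a b hab => (g k).injective hab) N
    exact hinj (by rw [hN, map_zero])
  -- eigenvalue extraction for s⁻¹
  have hEig : ∀ (k : I) (ν : ℂ), (sE k).maxGenEigenspace ν ≠ ⊥ → P ν⁻¹ ∧ ν ≠ 0 := by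
    intro k ν hne
    have h1 : (sE k).HasEigenvalue ν :=
      Module.End.HasUnifEigenvalue.lt zero_lt_one hne
    obtain ⟨w, hw, hw0⟩ :=
      Submodule.exists_mem_ne_zero_of_ne_bot (Module.End.hasEigenvalue_iff.mp h1)
    have hsw : (sE k) w = ν • w := Module.End.mem_eigenspace_iff.mp hw
    have hν0 : ν ≠ 0 := by
      rintro rfl
      rw [zero_smul] at hsw
      have h6 : (s k).symm w = 0 := hsw
      exact hw0 (by simpa using congrArg (s k) h6)
    have hsw2 : s k w = ν⁻¹ • w := by
      have h4 := congrArg (s k) hsw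
      rw [map_smul] at h4
      have h5 : w = ν • s k w := by
        rw [← h4]
        rw [show (sE k) w = (s k).symm w from rfl, ContinuousLinearEquiv.apply_symm_apply]
      conv_rhs => rw [h5]
      rw [smul_smul, inv_mul_cancel₀ hν0, one_smul]
    refine ⟨⟨k, ?_⟩, hν0⟩
    rw [Submodule.ne_bot_iff]
    refine ⟨w, ?_, hw0⟩
    rw [LinearMap.mem_ker, LinearMap.sub_apply, LinearMap.smul_apply, LinearMap.id_apply]
    rw [show (((s k).toLinearEquiv : W k →ₗ[ℂ] W k)) w = s k w from rfl, hsw2, sub_self]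
  -- key contraction step
  have key : ∀ z : ℂ, z ≠ 0 →
      ∃ γ : ∀ k : I, V k ≃L[ℂ] V k,
        (∀ h : H, actB G V γ B h = z • B h) ∧ (∀ k : I, actI V W γ i k = z • i k) ∧
        (∀ k : I, actJ V W γ j k = z • j k) := by
    intro z hz
    choose γ hγ using fun k =>
      S9Aux.exists_diag (gE k) (fun c => z ^ (m c)) (fun c => zpow_ne_zero _ hz)
    have hγsymm : ∀ (k : I) (c : ℂ) (v : V k), v ∈ (gE k).maxGenEigenspace c →
        (γ k).symm v = z ^ (-(m c)) • v := by
      intro k c v hv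
      have h5 : γ k (z ^ (-(m c)) • v) = v := by
        rw [map_smul, hγ k c v hv, smul_smul, ← zpow_add₀ hz, neg_add_cancel, zpow_zero,
          one_smul]
      exact (ContinuousLinearEquiv.symm_apply_eq _).mpr h5.symm
    refine ⟨γ, ?_, ?_, ?_⟩
    · intro h
      refine S9Aux.clm_ext_of_iSup ((gE (G.src h)).iSup_maxGenEigenspace_eq_top) ?_
      intro c v hv
      show (γ (G.tgt h)) (B h ((γ (G.src h)).symm v)) = (z • B h) v
      rw [hγsymm _ c v hv, map_smul, map_smul]
      by_cases hc : c = 0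
      · subst hc
        rw [hzero _ v hv]
        simp
      · rw [hγ _ (t * c) _ (hBmem h c v hv), hm1 c hc, smul_smul, ← zpow_add₀ hz]
        rw [show -(m c) + (m c + 1) = 1 by ring, zpow_one]
        rfl
    · intro k
      refine S9Aux.clm_ext_of_iSup (hdiag k) ?_
      intro μ w hw
      show γ k (i k w) = (z • i k) w
      rw [hγ _ _ _ (hImem k μ w hw)]
      by_cases h0 : i k w = 0
      · simp [ContinuousLinearMap.smul_apply, h0]
      · have hw0 : w ≠ 0 := fun hh => h0 (by rw [hh, map_zero])
        have hPμ : P μ := ⟨k, (Submodule.ne_bot_iff _).mpr ⟨w, hw, hw0⟩⟩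
        rw [hm2 μ hPμ, zpow_one]
        rfl
    · intro k
      refine S9Aux.clm_ext_of_iSup ((gE k).iSup_maxGenEigenspace_eq_top) ?_
      intro c v hv
      show j k ((γ k).symm v) = (z • j k) v
      rw [hγsymm k c v hv, map_smul]
      by_cases h0 : j k v = 0
      · simp [ContinuousLinearMap.smul_apply, h0]
      · have hne : (sE k).maxGenEigenspace (t * c) ≠ ⊥ := fun hbot => by
          have h2 := hJmem k c v hv
          rw [hbot] at h2
          exact h0 (by simpa using h2)
        obtain ⟨hPinv, htc0⟩ := hEig k (t * c) hne
        have h3 := hm2' _ hPinv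
        rw [inv_inv] at h3
        have e2 : t⁻¹ * (t * c) = c := by
          field_simp
        rw [e2] at h3
        rw [h3, show (-(-1 : ℤ)) = 1 by ring, zpow_one]
        rfl
  -- the zero datum lies in the (closed) orbit
  have h0mem : ((0, 0, 0) : (∀ h : H, V (G.src h) →L[ℂ] V (G.tgt h)) ×
      (∀ k : I, W k →L[ℂ] V k) × (∀ k : I, V k →L[ℂ] W k)) ∈
      {m : (∀ h : H, V (G.src h) →L[ℂ] V (G.tgt h)) ×
        (∀ k : I, W k →L[ℂ] V k) × (∀ k : I, V k →L[ℂ] W k) |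
      ∃ g : ∀ k : I, V k ≃L[ℂ] V k,
        m = (actB G V g B, actI V W g i, actJ V W g j)} := by
    have hcont : Continuous (fun z : ℂ =>
        ((fun h => z • B h, fun k => z • i k, fun k => z • j k) :
          (∀ h : H, V (G.src h) →L[ℂ] V (G.tgt h)) ×
          (∀ k : I, W k →L[ℂ] V k) × (∀ k : I, V k →L[ℂ] W k))) := by
      refine Continuous.prodMk ?_ (Continuous.prodMk ?_ ?_) <;>
        exact continuous_pi fun _ => continuous_id.smul continuous_const
    have hseq : Filter.Tendsto (fun n : ℕ => ((n : ℂ) + 1)⁻¹) Filter.atTop (nhds 0) := by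
      have h5 := (Complex.continuous_ofReal.tendsto 0).comp
        tendsto_one_div_add_atTop_nhds_zero_nat
      simp only [Function.comp_def] at h5
      have h6 : (fun n : ℕ => ((1 / ((n : ℝ) + 1) : ℝ) : ℂ))
          = fun n : ℕ => ((n : ℂ) + 1)⁻¹ := by
        funext n
        push_cast
        rw [one_div]
      rw [h6] at h5
      simpa using h5
    have htend := (hcont.tendsto 0).comp hseq
    have hval : ((fun h => (0 : ℂ) • B h, fun k => (0 : ℂ) • i k, fun k => (0 : ℂ) • j k) :
        (∀ h : H, V (G.src h) →L[ℂ] V (G.tgt h)) ×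
        (∀ k : I, W k →L[ℂ] V k) × (∀ k : I, V k →L[ℂ] W k))
        = (0, 0, 0) := by
      refine Prod.ext ?_ (Prod.ext ?_ ?_) <;> funext x <;> simp
    rw [hval] at htend
    refine hclosed.mem_of_tendsto htend (Filter.Eventually.of_forall fun n => ?_)
    have hz : ((n : ℂ) + 1)⁻¹ ≠ 0 := by
      apply inv_ne_zero
      have h9 : ((n : ℂ) + 1) = ((n + 1 : ℕ) : ℂ) := by push_cast; ring
      rw [h9]
      exact_mod_cast Nat.succ_ne_zero n
    obtain ⟨γ, h1, h2, h3⟩ := key _ hz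
    exact ⟨γ, by
      refine Prod.ext ?_ (Prod.ext ?_ ?_)
      · funext h; exact (h1 h).symm
      · funext k; exact (h2 k).symm
      · funext k; exact (h3 k).symm⟩
  obtain ⟨g0, hg0⟩ := h0mem
  have hB0 : (0 : ∀ h : H, V (G.src h) →L[ℂ] V (G.tgt h)) = actB G V g0 B :=
    congrArg Prod.fst hg0
  have hI0 : (0 : ∀ k : I, W k →L[ℂ] V k) = actI V W g0 i :=
    congrArg (fun p => p.2.1) hg0
  have hJ0 : (0 : ∀ k : I, V k →L[ℂ] W k) = actJ V W g0 j :=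
    congrArg (fun p => p.2.2) hg0
  refine ⟨?_, ?_, ?_⟩
  · intro h
    ext x
    have h7 := congrFun hB0.symm h
    have h8 := congrArg (fun (f : V (G.src h) →L[ℂ] V (G.tgt h)) =>
      f (g0 (G.src h) x)) h7
    simp only [actB, ContinuousLinearMap.comp_apply, ContinuousLinearEquiv.coe_coe,
      ContinuousLinearEquiv.symm_apply_apply, Pi.zero_apply,
      ContinuousLinearMap.zero_apply] at h8
    simpa using (g0 (G.tgt h)).map_eq_zero_iff.mp h8
  · intro k
    ext x
    have h7 := congrFun hI0.symm k
    have h8 := congrArg (fun (f : W k →L[ℂ] V k) => f x) h7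
    simp only [actI, ContinuousLinearMap.comp_apply, ContinuousLinearEquiv.coe_coe,
      Pi.zero_apply, ContinuousLinearMap.zero_apply] at h8
    simpa using (g0 k).map_eq_zero_iff.mp h8
  · intro k
    ext x
    have h7 := congrFun hJ0.symm k
    have h8 := congrArg (fun (f : V k →L[ℂ] W k) => f (g0 k x)) h7
    simp only [actJ, ContinuousLinearMap.comp_apply, ContinuousLinearEquiv.coe_coe,
      ContinuousLinearEquiv.symm_apply_apply, Pi.zero_apply,
      ContinuousLinearMap.zero_apply] at h8
    simpa using h8
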